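/- Let n ≥ 2, s ∈ (0,1), σ ∈ (−1,1), and fix r, δ > 0. There exists a constant C > 0, depending only on n, s, r, δ (and not on the set), such that for every measurable E ⊆ H which is a local minimizer of the fractional capillarity energy in H, one has ∬_{𝓠_{r,δ}} |χ_E(x) − χ_E(y)|² |x−y|^{−(n+s)} dx dy ≤ C, where 𝓠_{r,δ} := ℝ^{2n} ∖ (B_{r+δ}^c × B_{r+δ}^c). -/

import Mathlib

open MeasureTheory Metric Set Filter
open scoped ENNReal NNReal Pointwise

noncomputable section

/-- `ℝⁿ` with the Euclidean norm. -/
abbrev Rn (n : ℕ) := EuclideanSpace ℝ (Fin n)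

/-- The fractional interaction `𝓘_s(A,B)` (`ℝ≥0∞`-valued). -/
def frI (n : ℕ) (s : ℝ) (A B : Set (Rn n)) : ℝ≥0∞ :=
  ∫⁻ p in A ×ˢ B, ENNReal.ofReal (‖p.1 - p.2‖ ^ (-((n : ℝ) + s)))

/-- The fractional interaction `𝓘_s(A,B)` (real-valued). -/
def frIr (n : ℕ) (s : ℝ) (A B : Set (Rn n)) : ℝ := (frI n s A B).toReal

/-- The last coordinate `x_n` of a point of `ℝⁿ`. -/
def lastCoord (n : ℕ) (x : Rn n) : ℝ :=
  if h : 0 < n then x ⟨n - 1, Nat.sub_lt h one_pos⟩ else 0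

/-- The upper half-space `H = {x ∈ ℝⁿ : x_n > 0}`. -/
def halfSpace (n : ℕ) : Set (Rn n) := {x | 0 < lastCoord n x}

/-- `E ⊆ H` is a local minimizer of the fractional capillarity energy in `H`. -/
def LocalMin (n : ℕ) (s σ : ℝ) (E : Set (Rn n)) : Prop :=
  ∀ R : ℝ, 0 < R →
    frI n s (E ∩ ball 0 R) (Eᶜ ∩ ball 0 R) < ⊤ ∧
    ∀ F : Set (Rn n), MeasurableSet F → F ⊆ halfSpace n →
      F \ ball 0 R = E \ ball 0 R →
      frIr n s (E ∩ ball 0 R) (Eᶜ ∩ halfSpace n)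
          + frIr n s (E ∩ (ball 0 R)ᶜ) (Eᶜ ∩ ball 0 R ∩ halfSpace n)
          + σ * frIr n s (E ∩ ball 0 R) (halfSpace n)ᶜ
        ≤ frIr n s (F ∩ ball 0 R) (Fᶜ ∩ halfSpace n)
          + frIr n s (F ∩ (ball 0 R)ᶜ) (Fᶜ ∩ ball 0 R ∩ halfSpace n)
          + σ * frIr n s (F ∩ ball 0 R) (halfSpace n)ᶜ

/-- The vertical coordinate `t` of a point of `ℝ^{n+1}`. -/
def tcoord (n : ℕ) (X : Rn (n + 1)) : ℝ := X (Fin.last n)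

/-- The horizontal part `x` of a point of `ℝ^{n+1}`. -/
def xpart (n : ℕ) (X : Rn (n + 1)) : Rn n := WithLp.toLp 2 (fun i : Fin n => X i.castSucc)

/-- The point `(x,t) ∈ ℝ^{n+1}`. -/
def emb (n : ℕ) (x : Rn n) (t : ℝ) : Rn (n + 1) :=
  WithLp.toLp 2 (Fin.snoc (α := fun _ => ℝ) (WithLp.ofLp x) t)

/-- The open upper half-space `ℝ^{n+1}_+ = {t > 0}`. -/
def upperHalf (n : ℕ) : Set (Rn (n + 1)) := {X | 0 < tcoord n X}

/-- The fractional Poisson kernel `𝐏_s(x,t)`, normalized so that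
`∫ 𝐏_s(x,t) dx = 1` for all `t > 0`. -/
def poissonKer (n : ℕ) (s : ℝ) (x : Rn n) (t : ℝ) : ℝ :=
  (∫ z : Rn n, (‖z‖ ^ 2 + 1) ^ (-(((n : ℝ) + s) / 2)))⁻¹ * t ^ s *
    (‖x‖ ^ 2 + t ^ 2) ^ (-(((n : ℝ) + s) / 2))

/-- The `s`-extension `𝐄_u` of a function `u : ℝⁿ → ℝ`. -/
def extu (n : ℕ) (s : ℝ) (u : Rn n → ℝ) (X : Rn (n + 1)) : ℝ :=
  ∫ y, u y * poissonKer n s (xpart n X - y) (tcoord n X)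

/-- The `s`-extension `𝐄_E = 𝐄_{χ_E}` of a set `E ⊆ ℝⁿ`. -/
def extE (n : ℕ) (s : ℝ) (E : Set (Rn n)) : Rn (n + 1) → ℝ :=
  extu n s (E.indicator fun _ => (1 : ℝ))

/-- The energy `𝓕_{s,σ}(U,Ω)`. -/
def energy (n : ℕ) (s σ : ℝ) (U : Rn (n + 1) → ℝ) (Ω : Set (Rn (n + 1))) : ℝ :=
  (∫ X in Ω ∩ upperHalf n, tcoord n X ^ (1 - s) * ‖fderiv ℝ U X‖ ^ 2)
    + (σ - 1) *
      ∫ p in {x : Rn n | emb n x 0 ∈ Ω} ×ˢ (halfSpace n)ᶜ,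
        U (emb n p.1 0) * ‖p.1 - p.2‖ ^ (-((n : ℝ) + s))

/-- The monotonicity quantity `Φ_E(r) = r^{s-n} 𝓕_{s,σ}(𝐄_E, 𝓑_r)`. -/
def Phi (n : ℕ) (s σ : ℝ) (E : Set (Rn n)) (r : ℝ) : ℝ :=
  r ^ (s - (n : ℝ)) * energy n s σ (extE n s E) (ball (0 : Rn (n + 1)) r)

/-- The fractional perimeter `Per_s(F,ω)` (real-valued). -/
def perS (n : ℕ) (s : ℝ) (F ω : Set (Rn n)) : ℝ :=
  frIr n s (F ∩ ω) (Fᶜ ∩ ω) + frIr n s (F ∩ ω) (Fᶜ ∩ ωᶜ) + frIr n s (F ∩ ωᶜ) (Fᶜ ∩ ω)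

/-- The fractional perimeter `Per_s(F,ω)` (`ℝ≥0∞`-valued). -/
def perSE (n : ℕ) (s : ℝ) (F ω : Set (Rn n)) : ℝ≥0∞ :=
  frI n s (F ∩ ω) (Fᶜ ∩ ω) + frI n s (F ∩ ω) (Fᶜ ∩ ωᶜ) + frI n s (F ∩ ωᶜ) (Fᶜ ∩ ω)

/-- `Per_{s,σ}(F,B_R)`. -/
def perSigma (n : ℕ) (s σ : ℝ) (F : Set (Rn n)) (R : ℝ) : ℝ :=
  perS n s F (ball 0 R ∩ halfSpace n) + (σ - 1) * frIr n s (F ∩ ball 0 R) (halfSpace n)ᶜ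

/-- The fractional capillarity energy `𝓒_{s,σ}(E,ω)`. -/
def capEnergy (n : ℕ) (s σ : ℝ) (E ω : Set (Rn n)) : ℝ :=
  frIr n s E (ω \ E) + σ * frIr n s E ωᶜ

/-- A set `Ω ⊆ ℝ^{n+1}` has Lipschitz boundary: near each boundary point, after an
isometry of `ℝ^{n+1}`, the set is the region above the graph of a Lipschitz function. -/
def HasLipschitzBoundary (n : ℕ) (Ω : Set (Rn (n + 1))) : Prop :=
  ∀ p ∈ frontier Ω, ∃ (g : Rn (n + 1) ≃ᵢ Rn (n + 1)) (f : Rn n → ℝ) (K : ℝ≥0) (ε : ℝ),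
    0 < ε ∧ LipschitzWith K f ∧
      Ω ∩ ball p ε = {X ∈ ball p ε | f (xpart n (g X)) < tcoord n (g X)}

/-- A set `ω ⊆ ℝⁿ` has `C¹` boundary: near each boundary point it is the sublevel set
of a `C¹` defining function with nonvanishing gradient. -/
def HasC1Boundary (n : ℕ) (ω : Set (Rn n)) : Prop :=
  ∀ p ∈ frontier ω, ∃ (f : Rn n → ℝ) (U : Set (Rn n)), IsOpen U ∧ p ∈ U ∧
    ContDiffOn ℝ 1 f U ∧ (∀ q ∈ U, fderiv ℝ f q ≠ 0) ∧ ω ∩ U = {q ∈ U | f q < 0}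

/-- Convergence `χ_{E_k} → χ_E` in `L¹_loc(ℝⁿ)`. -/
def TendstoL1loc (n : ℕ) (Ek : ℕ → Set (Rn n)) (E : Set (Rn n)) : Prop :=
  ∀ K : Set (Rn n), IsCompact K →
    Tendsto (fun k => ∫ x in K,
        |(Ek k).indicator (fun _ => (1 : ℝ)) x - E.indicator (fun _ => (1 : ℝ)) x|)
      atTop (nhds 0)

/-- The quantity `M(ϑ,s)` appearing in the fractional Young law. -/
def Mfun (ϑ s : ℝ) : ℝ :=
  2 * ∫ r in Ioi (0 : ℝ), ∫ t in Ioo (0 : ℝ) ϑ,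
      r * (r ^ 2 + 2 * r * Real.cos t + 1) ^ (-((2 + s) / 2))

/-! Test the minimality of `E` in `B_R`, `R = r + δ`, against `F = E ∪ (B_R ∩ H)`. The competitor
fills the half ball, so its energy is at most `𝓘_s(B_R, B_Rᶜ) + σ 𝓘_s(B_R ∩ H, Hᶜ)`; since `σ ≤ 1`
and `E ⊆ H`, the comparison gives `𝓘_s(E ∩ B_R, Eᶜ) ≤ 𝓘_s(B_R, B_Rᶜ) + 2 𝓘_s(B_R ∩ H, Hᶜ)`.
The Gagliardo integral over `𝓠_{r,δ}` is at most `2 (2 𝓘_s(E ∩ B_R, Eᶜ) + 𝓘_s(B_Rᶜ, B_R))`.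

The two interactions of `B_R` and of `B_R ∩ H` with their complements are finite: in polar
coordinates `∫_{|x-y| ≥ t} |x-y|^{-n-s} dy = n |B_1| t^{-s} / s`, so each is bounded by
`∫ d(x)^{-s} dx`, `d` the distance to the complementary set, and `d` has sublevel sets
`{d ≤ ε}` of volume `O(ε)`, which makes `d^{-s}` integrable for `s < 1`. -/

theorem lastCoord_of_pos {n : ℕ} (hn : 0 < n) (x : Rn n) :
    lastCoord n x = x ⟨n - 1, Nat.sub_lt hn one_pos⟩ :=
  dif_pos hn

theorem continuous_lastCoord (n : ℕ) : Continuous (lastCoord n) := by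
  rcases Nat.eq_zero_or_pos n with rfl | hn
  · exact (continuous_const (y := (0 : ℝ))).congr fun x => by simp [lastCoord]
  · rw [funext (lastCoord_of_pos hn)]
    fun_prop

theorem measurableSet_halfSpace (n : ℕ) : MeasurableSet (halfSpace n) :=
  (isOpen_lt continuous_const (continuous_lastCoord n)).measurableSet

theorem abs_lastCoord_le_norm {n : ℕ} (x : Rn n) : |lastCoord n x| ≤ ‖x‖ := by
  by_cases hn : 0 < n
  · rw [lastCoord_of_pos hn]
    exact PiLp.norm_apply_le x _
  · simp [lastCoord, hn]

theorem lastCoord_sub {n : ℕ} (x y : Rn n) :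
    lastCoord n (x - y) = lastCoord n x - lastCoord n y := by
  by_cases hn : 0 < n
  · simp [lastCoord_of_pos hn]
  · simp [lastCoord, hn]

theorem frI_eq_lintegral_lintegral (n : ℕ) (s : ℝ) (A B : Set (Rn n)) :
    frI n s A B = ∫⁻ x in A, ∫⁻ y in B, ENNReal.ofReal (‖x - y‖ ^ (-((n : ℝ) + s))) := by
  rw [frI, Measure.volume_eq_prod, ← Measure.prod_restrict,
    lintegral_prod _ (by fun_prop : Measurable fun p : Rn n × Rn n =>
      ENNReal.ofReal (‖p.1 - p.2‖ ^ (-((n : ℝ) + s)))).aemeasurable]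

theorem frI_comm (n : ℕ) (s : ℝ) (A B : Set (Rn n)) : frI n s A B = frI n s B A := by
  rw [frI, frI, Measure.volume_eq_prod, ← Measure.prod_restrict, ← Measure.prod_restrict,
    ← lintegral_prod_swap]
  simp [norm_sub_rev]

theorem frI_mono {n : ℕ} {s : ℝ} {A A' B B' : Set (Rn n)} (hA : A ⊆ A') (hB : B ⊆ B') :
    frI n s A B ≤ frI n s A' B' :=
  lintegral_mono_set (prod_mono hA hB)

theorem frI_union_left_le (n : ℕ) (s : ℝ) (A A' B : Set (Rn n)) :
    frI n s (A ∪ A') B ≤ frI n s A B + frI n s A' B := by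
  rw [frI, union_prod]
  exact lintegral_union_le _ _ _

theorem frI_union_right_le (n : ℕ) (s : ℝ) (A B B' : Set (Rn n)) :
    frI n s A (B ∪ B') ≤ frI n s A B + frI n s A B' := by
  rw [frI, prod_union]
  exact lintegral_union_le _ _ _

theorem frIr_empty_right (n : ℕ) (s : ℝ) (A : Set (Rn n)) : frIr n s A ∅ = 0 := by
  simp [frIr, frI]

section AddHaar

variable {E : Type*} [NormedAddCommGroup E] [NormedSpace ℝ E] [FiniteDimensional ℝ E]
  [MeasurableSpace E] [BorelSpace E] [Nontrivial E] (μ : Measure E) [μ.IsAddHaarMeasure]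

theorem lintegral_compl_ball_norm_rpow_neg {s t : ℝ} (hs : 0 < s) (ht : 0 < t) :
    ∫⁻ y in (ball (0 : E) t)ᶜ, ENNReal.ofReal (‖y‖ ^ (-(Module.finrank ℝ E + s))) ∂μ
      = ENNReal.ofReal (Module.finrank ℝ E * μ.real (ball 0 1) * (t ^ (-s) / s)) := by
  set d := Module.finrank ℝ E
  set g : ℝ → ℝ := (Ici t).indicator fun y => y ^ (-(d + s)) with hg
  have hradial : ∀ y ∈ Ioi (0 : ℝ),
      y ^ (d - 1) • g y = (Ici t).indicator (fun y => y ^ (-1 - s)) y := by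
    intro y (hy : 0 < y)
    by_cases hyt : y ∈ Ici t
    · have hd : 1 ≤ d := Module.finrank_pos
      rw [hg, indicator_of_mem hyt, indicator_of_mem hyt, smul_eq_mul, ← Real.rpow_natCast,
        ← Real.rpow_add hy]
      push_cast [Nat.cast_sub hd]
      ring_nf
    · simp [hg, hyt]
  have hIci : Ioi (0 : ℝ) ∩ Ici t = Ici t := inter_eq_right.2 fun y hy => ht.trans_le hy
  have hint : Integrable (fun y : E => g ‖y‖) μ := by
    refine (integrable_fun_norm_addHaar μ).2 <|
      (integrableOn_congr_fun hradial measurableSet_Ioi).2 ?_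
    have hIoi : IntegrableOn (fun y : ℝ => y ^ (-1 - s)) (Ioi t) :=
      integrableOn_Ioi_rpow_of_lt (by linarith) ht
    exact ((integrableOn_Ici_iff_integrableOn_Ioi (by simp)).2 hIoi
      |>.integrable_indicator measurableSet_Ici).integrableOn
  calc ∫⁻ y in (ball (0 : E) t)ᶜ, ENNReal.ofReal (‖y‖ ^ (-(d + s))) ∂μ
      = ∫⁻ y, ENNReal.ofReal (g ‖y‖) ∂μ := by
        rw [← lintegral_indicator measurableSet_ball.compl]
        congr 1; ext y
        by_cases hy : ‖y‖ < t <;> simp [hg, indicator, hy, le_of_not_gt]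
    _ = ENNReal.ofReal (∫ y, g ‖y‖ ∂μ) :=
        (ofReal_integral_eq_lintegral_ofReal hint (ae_of_all _ fun y =>
          indicator_nonneg (fun y hy => Real.rpow_nonneg (ht.le.trans hy) _) _)).symm
    _ = _ := by
        rw [integral_fun_norm_addHaar μ g, setIntegral_congr_fun measurableSet_Ioi hradial,
          setIntegral_indicator measurableSet_Ici, hIci, integral_Ici_eq_integral_Ioi,
          integral_Ioi_rpow_of_lt (by linarith) ht]
        simp only [nsmul_eq_mul, smul_eq_mul, d]
        ring_nf

theorem measure_ball_inter_sub_norm_le {R ε : ℝ} (hε : 0 ≤ ε) (hεR : ε ≤ R) :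
    μ {x ∈ ball (0 : E) R | R - ‖x‖ ≤ ε}
      ≤ μ (ball 0 1) * ENNReal.ofReal (Module.finrank ℝ E * R ^ (Module.finrank ℝ E - 1))
        * ENNReal.ofReal ε := by
  set d := Module.finrank ℝ E
  have hsub : {x ∈ ball (0 : E) R | R - ‖x‖ ≤ ε} ⊆ ball 0 R \ ball 0 (R - ε) :=
    fun x hx => ⟨hx.1, fun h => by rw [mem_ball_zero_iff] at h; linarith [hx.2]⟩
  have hpow : R ^ d - (R - ε) ^ d ≤ d * R ^ (d - 1) * ε := by
    have h := abs_pow_sub_pow_le R (R - ε) d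
    rw [sub_sub_cancel, abs_of_nonneg hε, abs_of_nonneg (hε.trans hεR),
      abs_of_nonneg (sub_nonneg.2 hεR), max_eq_left (by linarith)] at h
    linarith [le_abs_self (R ^ d - (R - ε) ^ d)]
  calc μ {x ∈ ball (0 : E) R | R - ‖x‖ ≤ ε}
      ≤ μ (ball 0 R) - μ (ball 0 (R - ε)) :=
        (measure_mono hsub).trans_eq <| measure_sdiff (ball_subset_ball (by linarith))
          measurableSet_ball.nullMeasurableSet measure_ball_lt_top.ne
    _ = ENNReal.ofReal (R ^ d - (R - ε) ^ d) * μ (ball 0 1) := by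
        rw [μ.addHaar_ball (0 : E) (hε.trans hεR), μ.addHaar_ball (0 : E) (sub_nonneg.2 hεR),
          ← ENNReal.sub_mul fun _ _ => measure_ball_lt_top.ne,
          ENNReal.ofReal_sub _ (pow_nonneg (by linarith) _)]
    _ ≤ _ := by
        have hR : 0 ≤ R := hε.trans hεR
        rw [mul_comm, mul_assoc, ← ENNReal.ofReal_mul (by positivity)]
        gcongr

end AddHaar

theorem div_two_pow_succ_rpow_neg_mul_div_two_pow {c : ℝ} (hc : 0 < c) (s : ℝ) (k : ℕ) :
    (c / 2 ^ (k + 1)) ^ (-s) * (c / 2 ^ k) = 2 ^ s * c ^ (1 - s) * (2 ^ s / 2) ^ k := by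
  have hpow : (c / 2 ^ (k + 1)) ^ (-s) = ((2 : ℝ) ^ s) ^ (k + 1) / c ^ s := by
    rw [Real.rpow_neg (by positivity), Real.div_rpow hc.le (by positivity), ← Real.rpow_natCast,
      ← Real.rpow_mul zero_le_two, mul_comm, Real.rpow_mul zero_le_two, Real.rpow_natCast,
      inv_div]
  rw [hpow, Real.rpow_sub hc, Real.rpow_one, div_pow]
  field_simp
  ring

-- On the dyadic layer `c / 2 ^ (k + 1) < d ≤ c / 2 ^ k` the integral is at most
-- `(c / 2 ^ (k + 1)) ^ (-s) * L * c / 2 ^ k`: a geometric series of ratio `2 ^ (s - 1) < 1`.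
theorem setLIntegral_rpow_neg_lt_top {α : Type*} [MeasurableSpace α] {μ : Measure α}
    {A : Set α} {d : α → ℝ} {s c : ℝ} {L : ℝ≥0∞} (hs0 : 0 ≤ s) (hs1 : s < 1) (hc : 0 < c)
    (hL : L ≠ ⊤) (hd : ∀ x ∈ A, d x ∈ Ioc 0 c)
    (hvol : ∀ ε ∈ Ioc 0 c, μ {x ∈ A | d x ≤ ε} ≤ L * ENNReal.ofReal ε) :
    ∫⁻ x in A, ENNReal.ofReal (d x ^ (-s)) ∂μ < ⊤ := by
  set S : ℕ → Set α := fun k => {x ∈ A | d x ∈ Ioc (c / 2 ^ (k + 1)) (c / 2 ^ k)}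
  set q : ℝ := 2 ^ s / 2
  have hq : ENNReal.ofReal q < 1 := by
    rw [ENNReal.ofReal_lt_one, div_lt_one two_pos]
    simpa using Real.rpow_lt_rpow_of_exponent_lt one_lt_two hs1
  have hcover : A ⊆ ⋃ k, S k := by
    intro x hx
    obtain ⟨hdx, hdxc⟩ := hd x hx
    obtain ⟨k, hk, hk'⟩ := exists_nat_pow_near ((one_le_div hdx).2 hdxc) one_lt_two
    refine mem_iUnion.2 ⟨k, hx, ?_, ?_⟩
    · rw [div_lt_iff₀ (by positivity)]; rwa [div_lt_iff₀ hdx, mul_comm] at hk'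
    · rw [le_div_iff₀ (by positivity)]; rwa [le_div_iff₀ hdx, mul_comm] at hk
  have hpiece : ∀ k, ∫⁻ x in S k, ENNReal.ofReal (d x ^ (-s)) ∂μ
      ≤ L * ENNReal.ofReal (2 ^ s * c ^ (1 - s)) * ENNReal.ofReal q ^ k := by
    intro k
    have hε : c / 2 ^ (k + 1) > 0 := by positivity
    calc ∫⁻ x in S k, ENNReal.ofReal (d x ^ (-s)) ∂μ
        ≤ ∫⁻ _ in S k, ENNReal.ofReal ((c / 2 ^ (k + 1)) ^ (-s)) ∂μ :=
          setLIntegral_mono measurable_const fun x hx => ENNReal.ofReal_le_ofReal <|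
            Real.rpow_le_rpow_of_nonpos hε hx.2.1.le (by linarith)
      _ = ENNReal.ofReal ((c / 2 ^ (k + 1)) ^ (-s)) * μ (S k) := setLIntegral_const _ _
      _ ≤ ENNReal.ofReal ((c / 2 ^ (k + 1)) ^ (-s)) * (L * ENNReal.ofReal (c / 2 ^ k)) := by
          have hsub : S k ⊆ {x ∈ A | d x ≤ c / 2 ^ k} := fun x hx => ⟨hx.1, hx.2.2⟩
          gcongr
          exact (measure_mono hsub).trans <|
            hvol _ ⟨by positivity, div_le_self hc.le (one_le_pow₀ one_le_two)⟩
      _ = L * ENNReal.ofReal (2 ^ s * c ^ (1 - s)) * ENNReal.ofReal q ^ k := by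
          rw [← ENNReal.ofReal_pow (by positivity), mul_left_comm, mul_assoc,
            ← ENNReal.ofReal_mul (by positivity), ← ENNReal.ofReal_mul (by positivity)]
          rw [div_two_pow_succ_rpow_neg_mul_div_two_pow hc]
  calc ∫⁻ x in A, ENNReal.ofReal (d x ^ (-s)) ∂μ
      ≤ ∑' k, ∫⁻ x in S k, ENNReal.ofReal (d x ^ (-s)) ∂μ :=
        (lintegral_mono_set hcover).trans (lintegral_iUnion_le _ _)
    _ ≤ ∑' k, L * ENNReal.ofReal (2 ^ s * c ^ (1 - s)) * ENNReal.ofReal q ^ k :=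
        ENNReal.tsum_le_tsum hpiece
    _ = L * ENNReal.ofReal (2 ^ s * c ^ (1 - s)) * (1 - ENNReal.ofReal q)⁻¹ := by
        rw [ENNReal.tsum_mul_left, ENNReal.tsum_geometric]
    _ < ⊤ := by
        refine ENNReal.mul_lt_top (ENNReal.mul_lt_top hL.lt_top ENNReal.ofReal_lt_top) ?_
        exact ENNReal.inv_lt_top.2 (tsub_pos_of_lt hq)

theorem lintegral_compl_ball_kernel {n : ℕ} (hn : 0 < n) {s t : ℝ} (hs : 0 < s) (ht : 0 < t)
    (x : Rn n) :
    ∫⁻ y in (ball x t)ᶜ, ENNReal.ofReal (‖x - y‖ ^ (-((n : ℝ) + s)))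
      = ENNReal.ofReal (n * volume.real (ball (0 : Rn n) 1) * (t ^ (-s) / s)) := by
  have : Nonempty (Fin n) := ⟨⟨0, hn⟩⟩
  have h := lintegral_compl_ball_norm_rpow_neg (volume : Measure (Rn n)) hs ht
  rw [finrank_euclideanSpace_fin] at h
  rw [← h, ← lintegral_indicator measurableSet_ball.compl,
    ← lintegral_indicator measurableSet_ball.compl,
    ← lintegral_sub_left_eq_self _ x]
  congr 1; ext y
  simp [indicator, mem_ball, dist_eq_norm]

theorem frI_le_mul_setLIntegral_rpow {n : ℕ} (hn : 0 < n) {s : ℝ} (hs : 0 < s)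
    {A B : Set (Rn n)} (hA : MeasurableSet A) {d : Rn n → ℝ}
    (hd : ∀ x ∈ A, 0 < d x ∧ B ⊆ (ball x (d x))ᶜ) :
    frI n s A B ≤ ENNReal.ofReal (n * volume.real (ball (0 : Rn n) 1) / s)
      * ∫⁻ x in A, ENNReal.ofReal (d x ^ (-s)) := by
  rw [frI_eq_lintegral_lintegral, ← lintegral_const_mul' _ _ ENNReal.ofReal_ne_top]
  refine setLIntegral_mono' hA fun x hx => ?_
  calc ∫⁻ y in B, ENNReal.ofReal (‖x - y‖ ^ (-((n : ℝ) + s)))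
      ≤ ∫⁻ y in (ball x (d x))ᶜ, ENNReal.ofReal (‖x - y‖ ^ (-((n : ℝ) + s))) :=
        lintegral_mono_set (hd x hx).2
    _ = _ := by
        rw [lintegral_compl_ball_kernel hn hs (hd x hx).1, ← ENNReal.ofReal_mul (by positivity)]
        ring_nf

theorem volume_halfBall_inter_lastCoord_le {n : ℕ} (hn : 0 < n) {R ε : ℝ} :
    volume {x ∈ ball (0 : Rn n) R ∩ halfSpace n | lastCoord n x ≤ ε}
      ≤ ENNReal.ofReal (2 * R) ^ (n - 1) * ENNReal.ofReal ε := by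
  classical
  set j : Fin n := ⟨n - 1, Nat.sub_lt hn one_pos⟩
  set J : Fin n → Set ℝ := Function.update (fun _ => Icc (-R) R) j (Ioc 0 ε)
  have hsub : {x ∈ ball (0 : Rn n) R ∩ halfSpace n | lastCoord n x ≤ ε}
      ⊆ WithLp.ofLp ⁻¹' univ.pi J := by
    rintro x ⟨⟨hxR, hxH⟩, hxε⟩ i -
    rw [halfSpace, mem_ofPred_eq, lastCoord_of_pos hn] at hxH
    rw [lastCoord_of_pos hn] at hxε
    rcases eq_or_ne i j with rfl | hij
    · simp only [J, Function.update_self]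
      exact ⟨hxH, hxε⟩
    · simp only [J, Function.update_of_ne hij]
      exact abs_le.1 ((PiLp.norm_apply_le x i).trans (mem_ball_zero_iff.1 hxR).le)
  calc volume {x ∈ ball (0 : Rn n) R ∩ halfSpace n | lastCoord n x ≤ ε}
      ≤ volume (univ.pi J) :=
        (measure_mono hsub).trans_eq <| (PiLp.volume_preserving_ofLp (Fin n)).measure_preimage
          (MeasurableSet.univ_pi fun i => by
            rcases eq_or_ne i j with rfl | hij
            · simp [J]
            · simp [J, hij]).nullMeasurableSet
    _ = ENNReal.ofReal ε * ENNReal.ofReal (2 * R) ^ (n - 1) := by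
        have hJ : ∀ i, volume (J i)
            = Function.update (fun _ => ENNReal.ofReal (2 * R)) j (ENNReal.ofReal ε) i := by
          intro i
          rcases eq_or_ne i j with rfl | hij
          · simp [J]
          · simp [J, hij, two_mul]
        rw [volume_pi_pi, Finset.prod_congr rfl fun i _ => hJ i,
          Finset.prod_update_of_mem (Finset.mem_univ j)]
        simp [Finset.card_univ_sdiff]
    _ = _ := mul_comm _ _

theorem frI_ball_compl_lt_top {n : ℕ} (hn : 0 < n) {s R : ℝ} (hs0 : 0 < s) (hs1 : s < 1)
    (hR : 0 < R) : frI n s (ball 0 R) (ball 0 R)ᶜ < ⊤ := by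
  have : Nonempty (Fin n) := ⟨⟨0, hn⟩⟩
  have hsep : ∀ x ∈ ball (0 : Rn n) R, 0 < R - ‖x‖ ∧ (ball 0 R)ᶜ ⊆ (ball x (R - ‖x‖))ᶜ := by
    intro x hx
    refine ⟨sub_pos.2 (mem_ball_zero_iff.1 hx), fun y hy hyx => hy ?_⟩
    rw [mem_ball, dist_eq_norm] at hyx
    rw [mem_ball_zero_iff]
    linarith [norm_sub_norm_le y x]
  have hvol : ∀ ε ∈ Ioc 0 R, volume {x ∈ ball (0 : Rn n) R | R - ‖x‖ ≤ ε}
      ≤ volume (ball (0 : Rn n) 1) * ENNReal.ofReal (n * R ^ (n - 1)) * ENNReal.ofReal ε := by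
    intro ε hε
    have h := measure_ball_inter_sub_norm_le (volume : Measure (Rn n)) hε.1.le hε.2
    rwa [finrank_euclideanSpace_fin] at h
  have hint := setLIntegral_rpow_neg_lt_top hs0.le hs1 hR
    (ENNReal.mul_ne_top measure_ball_lt_top.ne ENNReal.ofReal_ne_top)
    (fun x hx => ⟨(hsep x hx).1, by linarith [norm_nonneg x]⟩) hvol
  exact (frI_le_mul_setLIntegral_rpow hn hs0 measurableSet_ball hsep).trans_lt
    (ENNReal.mul_lt_top ENNReal.ofReal_lt_top hint)

theorem frI_halfBall_compl_lt_top {n : ℕ} (hn : 0 < n) {s R : ℝ} (hs0 : 0 < s) (hs1 : s < 1)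
    (hR : 0 < R) : frI n s (ball 0 R ∩ halfSpace n) (halfSpace n)ᶜ < ⊤ := by
  have hsep : ∀ x ∈ ball (0 : Rn n) R ∩ halfSpace n,
      0 < lastCoord n x ∧ (halfSpace n)ᶜ ⊆ (ball x (lastCoord n x))ᶜ := by
    intro x hx
    refine ⟨hx.2, fun y hy hyx => hy ?_⟩
    rw [mem_ball, dist_eq_norm] at hyx
    have hyx' := abs_lastCoord_le_norm (y - x)
    rw [lastCoord_sub] at hyx'
    exact show 0 < lastCoord n y by linarith [neg_abs_le (lastCoord n y - lastCoord n x)]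
  have hle : ∀ x ∈ ball (0 : Rn n) R, lastCoord n x ≤ R := fun x hx =>
    ((le_abs_self _).trans (abs_lastCoord_le_norm x)).trans (mem_ball_zero_iff.1 hx).le
  have hint := setLIntegral_rpow_neg_lt_top hs0.le hs1 hR
    (ENNReal.pow_ne_top ENNReal.ofReal_ne_top) (fun x hx => ⟨hx.2, hle x hx.1⟩)
    fun _ _ => volume_halfBall_inter_lastCoord_le hn
  exact (frI_le_mul_setLIntegral_rpow hn hs0
    (measurableSet_ball.inter (measurableSet_halfSpace n)) hsep).trans_lt
    (ENNReal.mul_lt_top ENNReal.ofReal_lt_top hint)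

namespace LocalMin

variable {n : ℕ} {s σ R : ℝ} {E : Set (Rn n)}

theorem frI_inter_ball_inter_halfSpace_le (hE : LocalMin n s σ E) (hEm : MeasurableSet E)
    (hEH : E ⊆ halfSpace n) (hσ : σ ≤ 1) (hR : 0 < R)
    (hP : frI n s (ball 0 R) (ball 0 R)ᶜ ≠ ⊤)
    (hQ : frI n s (ball 0 R ∩ halfSpace n) (halfSpace n)ᶜ ≠ ⊤) :
    frI n s (E ∩ ball 0 R) (Eᶜ ∩ halfSpace n)
      ≤ frI n s (ball 0 R) (ball 0 R)ᶜ + frI n s (ball 0 R ∩ halfSpace n) (halfSpace n)ᶜ := by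
  obtain ⟨hfin, hmin⟩ := hE R hR
  set B := ball (0 : Rn n) R
  set H := halfSpace n
  have hcomp := hmin (E ∪ B ∩ H)
    (hEm.union (measurableSet_ball.inter (measurableSet_halfSpace n)))
    (union_subset hEH inter_subset_right)
    (by ext x; simp only [Set.mem_sdiff, mem_union, mem_inter_iff]; tauto)
  have hFB : (E ∪ B ∩ H) ∩ B = B ∩ H := by
    ext x; have := @hEH x; simp only [mem_inter_iff, mem_union]; tauto
  have hFc : (E ∪ B ∩ H)ᶜ ∩ B ∩ H = ∅ := by
    ext x; simp only [mem_inter_iff, mem_compl_iff, mem_union, mem_empty_iff_false]; tauto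
  rw [hFB, hFc, frIr_empty_right] at hcomp
  have hb1 : frIr n s (B ∩ H) ((E ∪ B ∩ H)ᶜ ∩ H) ≤ (frI n s B Bᶜ).toReal :=
    ENNReal.toReal_mono hP <| frI_mono inter_subset_left fun x hx hxB => hx.1 (Or.inr ⟨hxB, hx.2⟩)
  have ha3 : frIr n s (E ∩ B) Hᶜ ≤ (frI n s (B ∩ H) Hᶜ).toReal :=
    ENNReal.toReal_mono hQ <| frI_mono (fun x hx => ⟨hx.2, hEH hx.1⟩) subset_rfl
  -- `LocalMin` compares `toReal`s, so reading off a bound on `frI` needs its finiteness.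
  have ha1 : frI n s (E ∩ B) (Eᶜ ∩ H) ≠ ⊤ := by
    have hsplit : Eᶜ ∩ H ⊆ Eᶜ ∩ B ∪ Bᶜ := fun x hx => (em (x ∈ B)).imp (⟨hx.1, ·⟩) id
    refine ((frI_mono subset_rfl hsplit).trans (frI_union_right_le n s _ _ _)).trans_lt ?_ |>.ne
    exact ENNReal.add_lt_top.2
      ⟨hfin, (frI_mono inter_subset_right subset_rfl).trans_lt hP.lt_top⟩
  rw [← ENNReal.toReal_le_toReal ha1 (ENNReal.add_ne_top.2 ⟨hP, hQ⟩), ENNReal.toReal_add hP hQ]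
  have hσa3 := mul_le_of_le_one_left (sub_nonneg.2 ha3) hσ
  have ha2 : 0 ≤ frIr n s (E ∩ Bᶜ) (Eᶜ ∩ B ∩ H) := ENNReal.toReal_nonneg
  have ha3' : 0 ≤ frIr n s (E ∩ B) Hᶜ := ENNReal.toReal_nonneg
  change frIr n s (E ∩ B) (Eᶜ ∩ H) ≤ _
  unfold frIr at *
  linarith

theorem frI_inter_ball_compl_le (hE : LocalMin n s σ E) (hEm : MeasurableSet E)
    (hEH : E ⊆ halfSpace n) (hσ : σ ≤ 1) (hR : 0 < R)
    (hP : frI n s (ball 0 R) (ball 0 R)ᶜ ≠ ⊤)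
    (hQ : frI n s (ball 0 R ∩ halfSpace n) (halfSpace n)ᶜ ≠ ⊤) :
    frI n s (E ∩ ball 0 R) Eᶜ
      ≤ frI n s (ball 0 R) (ball 0 R)ᶜ + 2 * frI n s (ball 0 R ∩ halfSpace n) (halfSpace n)ᶜ := by
  have hsplit : Eᶜ ⊆ Eᶜ ∩ halfSpace n ∪ (halfSpace n)ᶜ := fun x hx =>
    (em (x ∈ halfSpace n)).imp (⟨hx, ·⟩) id
  calc frI n s (E ∩ ball 0 R) Eᶜ
      ≤ frI n s (E ∩ ball 0 R) (Eᶜ ∩ halfSpace n) + frI n s (E ∩ ball 0 R) (halfSpace n)ᶜ :=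
        (frI_mono subset_rfl hsplit).trans (frI_union_right_le n s _ _ _)
    _ ≤ (frI n s (ball 0 R) (ball 0 R)ᶜ + frI n s (ball 0 R ∩ halfSpace n) (halfSpace n)ᶜ)
          + frI n s (ball 0 R ∩ halfSpace n) (halfSpace n)ᶜ := by
        gcongr
        · exact hE.frI_inter_ball_inter_halfSpace_le hEm hEH hσ hR hP hQ
        · exact frI_mono (fun x hx => ⟨hx.2, hEH hx.1⟩) subset_rfl
    _ = _ := by ring

end LocalMin

theorem ofReal_sq_abs_indicator_sub_mul {α : Type*} (E : Set α) (k : α × α → ℝ) (p : α × α) :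
    ENNReal.ofReal (|E.indicator (fun _ => (1 : ℝ)) p.1 - E.indicator (fun _ => (1 : ℝ)) p.2| ^ 2
      * k p) = (E ×ˢ Eᶜ ∪ Eᶜ ×ˢ E).indicator (fun q => ENNReal.ofReal (k q)) p := by
  obtain ⟨x, y⟩ := p
  by_cases hx : x ∈ E <;> by_cases hy : y ∈ E <;> simp [hx, hy]

theorem lintegral_gagliardo_le {n : ℕ} (s : ℝ) {E : Set (Rn n)} (hE : MeasurableSet E)
    (B : Set (Rn n)) :
    ∫⁻ p in (Bᶜ ×ˢ Bᶜ)ᶜ, ENNReal.ofReal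
        (|E.indicator (fun _ => (1 : ℝ)) p.1 - E.indicator (fun _ => (1 : ℝ)) p.2| ^ 2
          * ‖p.1 - p.2‖ ^ (-((n : ℝ) + s)))
      ≤ 2 * (2 * frI n s (E ∩ B) Eᶜ + frI n s Bᶜ B) := by
  set k : Rn n × Rn n → ℝ≥0∞ := fun p => ENNReal.ofReal (‖p.1 - p.2‖ ^ (-((n : ℝ) + s)))
  set S := E ×ˢ Eᶜ ∪ Eᶜ ×ˢ E
  have hS : MeasurableSet S := (hE.prod hE.compl).union (hE.compl.prod hE)
  have hcover : S ∩ (Bᶜ ×ˢ Bᶜ)ᶜ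
      ⊆ ((E ∩ B) ×ˢ Eᶜ ∪ (Eᶜ ∩ B) ×ˢ E) ∪ (E ×ˢ (Eᶜ ∩ B) ∪ Eᶜ ×ˢ (E ∩ B)) := by
    rintro ⟨x, y⟩ ⟨hS, hB⟩
    simp only [S, mem_prod, mem_union, mem_inter_iff, mem_compl_iff, not_and_or, not_not] at *
    tauto
  have hcross : frI n s E (Eᶜ ∩ B) ≤ frI n s (E ∩ B) Eᶜ + frI n s Bᶜ B := by
    have hsplit : E ⊆ E ∩ B ∪ Bᶜ := fun x hx => (em (x ∈ B)).imp (⟨hx, ·⟩) id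
    exact (frI_mono hsplit subset_rfl).trans <| (frI_union_left_le n s _ _ _).trans <|
      add_le_add (frI_mono subset_rfl inter_subset_left) (frI_mono subset_rfl inter_subset_right)
  calc ∫⁻ p in (Bᶜ ×ˢ Bᶜ)ᶜ, ENNReal.ofReal
        (|E.indicator (fun _ => (1 : ℝ)) p.1 - E.indicator (fun _ => (1 : ℝ)) p.2| ^ 2
          * ‖p.1 - p.2‖ ^ (-((n : ℝ) + s)))
      = ∫⁻ p in S ∩ (Bᶜ ×ˢ Bᶜ)ᶜ, k p := by
        rw [← Measure.restrict_restrict hS, ← lintegral_indicator hS]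
        exact lintegral_congr fun p => ofReal_sq_abs_indicator_sub_mul E
          (fun q : Rn n × Rn n => ‖q.1 - q.2‖ ^ (-((n : ℝ) + s))) p
    _ ≤ (frI n s (E ∩ B) Eᶜ + frI n s (Eᶜ ∩ B) E) + (frI n s E (Eᶜ ∩ B) + frI n s Eᶜ (E ∩ B)) :=
        (lintegral_mono_set hcover).trans <| (lintegral_union_le _ _ _).trans <|
          add_le_add (lintegral_union_le _ _ _) (lintegral_union_le _ _ _)
    _ ≤ 2 * (2 * frI n s (E ∩ B) Eᶜ + frI n s Bᶜ B) := by
        rw [frI_comm n s (Eᶜ ∩ B), frI_comm n s Eᶜ]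
        calc _ ≤ (frI n s (E ∩ B) Eᶜ + (frI n s (E ∩ B) Eᶜ + frI n s Bᶜ B))
              + ((frI n s (E ∩ B) Eᶜ + frI n s Bᶜ B) + frI n s (E ∩ B) Eᶜ) := by gcongr
          _ = _ := by ring

/-- uniform Gagliardo seminorm bound for local minimizers. -/
theorem stmt_14 (n : ℕ) (hn : 2 ≤ n) (s σ : ℝ) (hs : s ∈ Set.Ioo (0 : ℝ) 1)
    (hσ : σ ∈ Set.Ioo (-1 : ℝ) 1) (r δ : ℝ) (hr : 0 < r) (hδ : 0 < δ) :
    ∃ C : ℝ, 0 < C ∧ ∀ E : Set (Rn n), MeasurableSet E → E ⊆ halfSpace n →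
      LocalMin n s σ E →
      (∫⁻ p in (((ball (0 : Rn n) (r + δ))ᶜ) ×ˢ ((ball (0 : Rn n) (r + δ))ᶜ))ᶜ,
          ENNReal.ofReal
            (|E.indicator (fun _ => (1 : ℝ)) p.1 - E.indicator (fun _ => (1 : ℝ)) p.2| ^ 2
              * ‖p.1 - p.2‖ ^ (-((n : ℝ) + s))))
        ≤ ENNReal.ofReal C := by
  have hn0 : 0 < n := by omega
  have hR : 0 < r + δ := add_pos hr hδ
  set P := frI n s (ball 0 (r + δ)) (ball 0 (r + δ))ᶜ
  set Q := frI n s (ball 0 (r + δ) ∩ halfSpace n) (halfSpace n)ᶜ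
  have hP : P ≠ ⊤ := (frI_ball_compl_lt_top hn0 hs.1 hs.2 hR).ne
  have hQ : Q ≠ ⊤ := (frI_halfBall_compl_lt_top hn0 hs.1 hs.2 hR).ne
  have hM : 2 * (2 * (P + 2 * Q) + P) ≠ ⊤ := by finiteness
  refine ⟨(2 * (2 * (P + 2 * Q) + P)).toReal + 1, by positivity, fun E hEm hEH hE => ?_⟩
  calc _ ≤ 2 * (2 * frI n s (E ∩ ball 0 (r + δ)) Eᶜ
          + frI n s (ball 0 (r + δ))ᶜ (ball 0 (r + δ))) :=
        lintegral_gagliardo_le s hEm _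
    _ ≤ 2 * (2 * (P + 2 * Q) + P) := by
        rw [frI_comm n s (ball 0 (r + δ))ᶜ]
        gcongr
        exact hE.frI_inter_ball_compl_le hEm hEH hσ.2.le hR hP hQ
    _ ≤ ENNReal.ofReal ((2 * (2 * (P + 2 * Q) + P)).toReal + 1) :=
        (ENNReal.le_ofReal_iff_toReal_le hM (by positivity)).2 (by linarith)
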